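/- In the twisted deformative Schrödinger–Virasoro algebra 𝓛 with μ = 0 and λ = 1, the linear map D₁ defined by D₁(Yₙ) = Mₙ, D₁(Lₙ) = D₁(Mₙ) = 0 is an outer derivation of 𝓛. -/

import Mathlib

/-!
A linear map satisfying the Leibniz rule on a spanning set of generators is a derivation, and for
`D₁` this is a finite check on the brackets of `L`, `Y`, `M`. It is outer because the coordinate of
`M₀` kills `⁅𝓛, Y₀⁆`: `⁅Lₙ, Y₀⁆ = -n Yₙ`, `⁅Yₙ, Y₀⁆ = -n Mₙ` vanishes at `n = 0`, and
`⁅Mₙ, Y₀⁆ = 0`. An inner derivation `ad z` would therefore give `D₁ Y₀ = ⁅z, Y₀⁆` a zero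
`M₀`-coordinate, whereas `D₁ Y₀ = M₀`.
-/

section Leibniz

variable {R L : Type*} [CommRing R] [LieRing L] [LieAlgebra R L]

theorem leibniz_symm (D : L →ₗ[R] L) {x y : L} (h : D ⁅x, y⁆ = ⁅D x, y⁆ + ⁅x, D y⁆) :
    D ⁅y, x⁆ = ⁅D y, x⁆ + ⁅y, D x⁆ := by
  rw [← lie_skew, map_neg, h, neg_add, ← lie_skew, ← lie_skew x, neg_neg, neg_neg, add_comm]

theorem leibniz_of_span_eq_top {S : Set L} (hS : Submodule.span R S = ⊤) (D : L →ₗ[R] L)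
    (h : ∀ x ∈ S, ∀ y ∈ S, D ⁅x, y⁆ = ⁅D x, y⁆ + ⁅x, D y⁆) (x y : L) :
    D ⁅x, y⁆ = ⁅D x, y⁆ + ⁅x, D y⁆ := by
  have hx : x ∈ Submodule.span R S := hS ▸ Submodule.mem_top
  have hy : y ∈ Submodule.span R S := hS ▸ Submodule.mem_top
  induction hx, hy using Submodule.span_induction₂ with
  | mem_mem a b ha hb => exact h a ha b hb
  | zero_left b _ => simp
  | zero_right a _ => simp
  | add_left a b c _ _ _ h₁ h₂ => simp only [add_lie, map_add, h₁, h₂]; abel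
  | add_right a b c _ _ _ h₁ h₂ => simp only [lie_add, map_add, h₁, h₂]; abel
  | smul_left r a b _ _ h => simp only [smul_lie, map_smul, h, smul_add]
  | smul_right r a b _ _ h => simp only [lie_smul, map_smul, h, smul_add]

end Leibniz

section SchrodingerVirasoro

variable {𝓛 : Type*} [LieRing 𝓛] [LieAlgebra ℂ 𝓛] {L Y M : ℤ → 𝓛}

theorem leibniz_on_generators {D : 𝓛 →ₗ[ℂ] 𝓛}
    (hLL : ∀ n m : ℤ, ⁅L n, L m⁆ = ((m : ℂ) - (n : ℂ)) • L (n + m))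
    (hLY : ∀ n m : ℤ, ⁅L n, Y m⁆ = ((m : ℂ) - (n : ℂ)) • Y (n + m))
    (hYY : ∀ n m : ℤ, ⁅Y n, Y m⁆ = ((m : ℂ) - (n : ℂ)) • M (n + m))
    (hLM : ∀ n m : ℤ, ⁅L n, M m⁆ = ((m : ℂ) - (n : ℂ)) • M (n + m))
    (hYM : ∀ n m : ℤ, ⁅Y n, M m⁆ = 0)
    (hMM : ∀ n m : ℤ, ⁅M n, M m⁆ = 0)
    (hDL : ∀ n : ℤ, D (L n) = 0) (hDY : ∀ n : ℤ, D (Y n) = M n) (hDM : ∀ n : ℤ, D (M n) = 0) :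
    ∀ x ∈ Set.range L ∪ Set.range Y ∪ Set.range M,
      ∀ y ∈ Set.range L ∪ Set.range Y ∪ Set.range M, D ⁅x, y⁆ = ⁅D x, y⁆ + ⁅x, D y⁆ := by
  have hLL' : ∀ n m, D ⁅L n, L m⁆ = ⁅D (L n), L m⁆ + ⁅L n, D (L m)⁆ := by
    simp [hLL, hDL]
  have hLY' : ∀ n m, D ⁅L n, Y m⁆ = ⁅D (L n), Y m⁆ + ⁅L n, D (Y m)⁆ := by
    simp [hLY, hLM, hDL, hDY]
  have hLM' : ∀ n m, D ⁅L n, M m⁆ = ⁅D (L n), M m⁆ + ⁅L n, D (M m)⁆ := by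
    simp [hLM, hDL, hDM]
  have hYY' : ∀ n m, D ⁅Y n, Y m⁆ = ⁅D (Y n), Y m⁆ + ⁅Y n, D (Y m)⁆ := by
    simp [hYY, hDY, hDM, ← lie_skew (M _) (Y _), hYM]
  have hYM' : ∀ n m, D ⁅Y n, M m⁆ = ⁅D (Y n), M m⁆ + ⁅Y n, D (M m)⁆ := by
    simp [hYM, hMM, hDY, hDM]
  have hMM' : ∀ n m, D ⁅M n, M m⁆ = ⁅D (M n), M m⁆ + ⁅M n, D (M m)⁆ := by
    simp [hMM, hDM]
  rintro _ ((⟨n, rfl⟩ | ⟨n, rfl⟩) | ⟨n, rfl⟩) _ ((⟨m, rfl⟩ | ⟨m, rfl⟩) | ⟨m, rfl⟩)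
  exacts [hLL' n m, hLY' n m, hLM' n m, leibniz_symm D (hLY' m n), hYY' n m, hYM' n m,
    leibniz_symm D (hLM' m n), leibniz_symm D (hYM' m n), hMM' n m]

theorem exists_coord_M_zero
    (hspan : Submodule.span ℂ (Set.range L ∪ Set.range Y ∪ Set.range M) = ⊤)
    (hind : LinearIndependent ℂ (fun p : ℤ × Fin 3 =>
      if p.2 = 0 then L p.1 else if p.2 = 1 then Y p.1 else M p.1)) :
    ∃ f : 𝓛 →ₗ[ℂ] ℂ, (∀ n, f (L n) = 0) ∧ (∀ n, f (Y n) = 0) ∧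
      ∀ n, f (M n) = if n = 0 then 1 else 0 := by
  have hsp : ⊤ ≤ Submodule.span ℂ (Set.range fun p : ℤ × Fin 3 =>
      if p.2 = 0 then L p.1 else if p.2 = 1 then Y p.1 else M p.1) := by
    rw [← hspan, Submodule.span_le]
    rintro _ ((⟨n, rfl⟩ | ⟨n, rfl⟩) | ⟨n, rfl⟩)
    exacts [Submodule.subset_span ⟨(n, 0), rfl⟩, Submodule.subset_span ⟨(n, 1), rfl⟩,
      Submodule.subset_span ⟨(n, 2), rfl⟩]
  set b := Module.Basis.mk hind hsp
  have hcoord : ∀ p, b.coord (0, 2) (b p) = if p = (0, 2) then 1 else 0 := fun p => by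
    rw [Module.Basis.coord_apply, Module.Basis.repr_self, Finsupp.single_apply, eq_comm]
  refine ⟨b.coord (0, 2), fun n => ?_, fun n => ?_, fun n => ?_⟩
  · simpa [b] using hcoord (n, 0)
  · simpa [b] using hcoord (n, 1)
  · simpa [b, Prod.ext_iff] using hcoord (n, 2)

theorem coord_M_zero_lie_Y_zero
    (hspan : Submodule.span ℂ (Set.range L ∪ Set.range Y ∪ Set.range M) = ⊤)
    (hLY : ∀ n m : ℤ, ⁅L n, Y m⁆ = ((m : ℂ) - (n : ℂ)) • Y (n + m))
    (hYY : ∀ n m : ℤ, ⁅Y n, Y m⁆ = ((m : ℂ) - (n : ℂ)) • M (n + m))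
    (hYM : ∀ n m : ℤ, ⁅Y n, M m⁆ = 0)
    {f : 𝓛 →ₗ[ℂ] ℂ} (hfY : ∀ n, f (Y n) = 0) (hfM : ∀ n, f (M n) = if n = 0 then 1 else 0)
    (x : 𝓛) : f ⁅Y 0, x⁆ = 0 := by
  suffices f ∘ₗ LieAlgebra.ad ℂ 𝓛 (Y 0) = 0 from LinearMap.congr_fun this x
  refine LinearMap.ext_on hspan ?_
  rintro _ ((⟨n, rfl⟩ | ⟨n, rfl⟩) | ⟨n, rfl⟩)
  · simp [← lie_skew (Y 0) (L n), hLY, hfY]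
  · by_cases hn : n = 0 <;> simp [← lie_skew (Y 0) (Y n), hYY, hfM, hn]
  · simp [hYM]

end SchrodingerVirasoro

theorem stmt_14 (𝓛 : Type*) [LieRing 𝓛] [LieAlgebra ℂ 𝓛]
    (L Y M : ℤ → 𝓛)
    (hspan : Submodule.span ℂ (Set.range L ∪ Set.range Y ∪ Set.range M) = ⊤)
    (hind : LinearIndependent ℂ (fun p : ℤ × Fin 3 =>
      if p.2 = 0 then L p.1 else if p.2 = 1 then Y p.1 else M p.1))
    (hLL : ∀ n m : ℤ, ⁅L n, L m⁆ = ((m : ℂ) - (n : ℂ)) • L (n + m))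
    (hLY : ∀ n m : ℤ, ⁅L n, Y m⁆ = ((m : ℂ) - (n : ℂ)) • Y (n + m))
    (hYY : ∀ n m : ℤ, ⁅Y n, Y m⁆ = ((m : ℂ) - (n : ℂ)) • M (n + m))
    (hLM : ∀ n m : ℤ, ⁅L n, M m⁆ = ((m : ℂ) - (n : ℂ)) • M (n + m))
    (hYM : ∀ n m : ℤ, ⁅Y n, M m⁆ = 0)
    (hMM : ∀ n m : ℤ, ⁅M n, M m⁆ = 0)
    (D : 𝓛 →ₗ[ℂ] 𝓛)
    (hDL : ∀ n : ℤ, D (L n) = 0)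
    (hDY : ∀ n : ℤ, D (Y n) = M n)
    (hDM : ∀ n : ℤ, D (M n) = 0) :
    (∀ x y : 𝓛, D ⁅x, y⁆ = ⁅D x, y⁆ + ⁅x, D y⁆) ∧
      ¬ ∃ z : 𝓛, ∀ x : 𝓛, D x = ⁅z, x⁆ := by
  refine ⟨leibniz_of_span_eq_top hspan D
    (leibniz_on_generators hLL hLY hYY hLM hYM hMM hDL hDY hDM), ?_⟩
  rintro ⟨z, hz⟩
  obtain ⟨f, -, hfY, hfM⟩ := exists_coord_M_zero hspan hind
  have hfDY : f (D (Y 0)) = 1 := by simp [hDY, hfM]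
  rw [hz, ← lie_skew, map_neg, coord_M_zero_lie_Y_zero hspan hLY hYY hYM hfY hfM z,
    neg_zero] at hfDY
  exact zero_ne_one hfDY
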